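/- arXiv:1210.8439 — 3 statements merged into one kernel-verified Lean document; each statement's English description precedes it below -/
import Mathlib

section
/- Let G = (V, E) be a finite simple undirected graph, and let M ⊆ V be the set of 'marked' vertices, where a vertex u is marked if it has a neighbor v with (deg(v), ID(v)) > (deg(u), ID(u)) in lexicographic order, for an injective function ID : V → ℕ. Then the vertex maximizing (deg, ID) is unmarked, no two unmarked vertices are adjacent, and the number of marked vertices with at least one neighbor is at least half the number of non-isolated vertices. -/
open scoped Classical

/-- A vertex `u` is *marked* if it has a neighbor `v` whose pair `(deg v, ID v)`
is lexicographically larger than `(deg u, ID u)`. -/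
def isMarked {V : Type*} [Fintype V] (G : SimpleGraph V) (ID : V → ℕ) (u : V) : Prop :=
  ∃ v, G.Adj u v ∧
    toLex (G.degree u, ID u) < toLex (G.degree v, ID v)

open Finset

namespace SimpleGraph

variable {V : Type*} [Fintype V] (G : SimpleGraph V) [DecidableRel G.Adj]

theorem card_le_card_of_adj_mem_of_degree_le (U M : Finset V)
    (hU : ∀ u ∈ U, 0 < G.degree u)
    (hM : ∀ u ∈ U, ∀ v, G.Adj u v → v ∈ M ∧ G.degree v ≤ G.degree u) :
    #U ≤ #M := by
  -- Every `u ∈ U` sends weight `1 / deg u` to each neighbour; a vertex `v ∈ M` receives at most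
  -- `deg v` such weights, each at most `1 / deg v`.
  let w : V → V → ℚ := fun u v => if G.Adj u v then (G.degree u : ℚ)⁻¹ else 0
  have hout : ∀ u ∈ U, ∑ v ∈ M, w u v = 1 := by
    intro u hu
    have hnbr : M.filter (G.Adj u) = G.neighborFinset u := by
      ext v
      simpa using fun huv => (hM u hu v huv).1
    rw [← sum_filter, hnbr, sum_const, card_neighborFinset_eq_degree, nsmul_eq_mul]
    exact mul_inv_cancel₀ (by exact_mod_cast (hU u hu).ne')
  have hin : ∀ v ∈ M, ∑ u ∈ U, w u v ≤ 1 := by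
    intro v _
    have hle : ∀ u ∈ U, w u v ≤ if G.Adj u v then (G.degree v : ℚ)⁻¹ else 0 := by
      intro u hu
      by_cases huv : G.Adj u v
      · simp only [w, huv, if_true]
        exact inv_anti₀ (by exact_mod_cast G.degree_pos_iff_exists_adj v |>.mpr ⟨u, huv.symm⟩)
          (by exact_mod_cast (hM u hu v huv).2)
      · simp [w, huv]
    have hcard : #(U.filter (G.Adj · v)) ≤ G.degree v := by
      rw [← card_neighborFinset_eq_degree]
      exact card_le_card fun u hu => by simpa [adj_comm] using (mem_filter.mp hu).2
    calc ∑ u ∈ U, w u v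
        ≤ ∑ u ∈ U, if G.Adj u v then (G.degree v : ℚ)⁻¹ else 0 := sum_le_sum hle
      _ = #(U.filter (G.Adj · v)) * (G.degree v : ℚ)⁻¹ := by
        rw [← sum_filter, sum_const, nsmul_eq_mul]
      _ ≤ G.degree v * (G.degree v : ℚ)⁻¹ := by gcongr
      _ ≤ 1 := mul_inv_le_one
  have : (#U : ℚ) ≤ #M := calc
    (#U : ℚ) = ∑ u ∈ U, ∑ v ∈ M, w u v := by simp [sum_congr rfl hout]
    _ = ∑ v ∈ M, ∑ u ∈ U, w u v := sum_comm
    _ ≤ ∑ v ∈ M, 1 := sum_le_sum hin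
    _ = #M := by simp
  exact_mod_cast this

end SimpleGraph

section Marking

variable {V : Type*} [Fintype V] {G : SimpleGraph V} [DecidableRel G.Adj] {ID : V → ℕ}

-- `isMarked` measures degrees with the classical `Fintype` instance on neighbour sets.
theorem isMarked_iff {u : V} :
    isMarked G ID u ↔
      ∃ v, G.Adj u v ∧ toLex (G.degree u, ID u) < toLex (G.degree v, ID v) := by
  unfold isMarked
  convert Iff.rfl

theorem lt_of_not_isMarked_of_adj (hID : Function.Injective ID) {u v : V}
    (hu : ¬ isMarked G ID u) (huv : G.Adj u v) :
    toLex (G.degree v, ID v) < toLex (G.degree u, ID u) := by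
  rw [isMarked_iff] at hu
  simp only [not_exists, not_and, not_lt] at hu
  refine (hu v huv).lt_of_ne fun h => G.ne_of_adj huv (hID ?_).symm
  exact congrArg Prod.snd (toLex_inj.mp h)

theorem isMarked_of_not_isMarked_of_adj (hID : Function.Injective ID) {u v : V}
    (hu : ¬ isMarked G ID u) (huv : G.Adj u v) : isMarked G ID v :=
  isMarked_iff.mpr ⟨u, huv.symm, lt_of_not_isMarked_of_adj hID hu huv⟩

theorem degree_le_of_not_isMarked_of_adj (hID : Function.Injective ID) {u v : V}
    (hu : ¬ isMarked G ID u) (huv : G.Adj u v) : G.degree v ≤ G.degree u :=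
  Prod.Lex.monotone_fst _ _ (lt_of_not_isMarked_of_adj hID hu huv).le

end Marking

theorem elimination_basic_general {V : Type*} [Fintype V]
    (G : SimpleGraph V) [DecidableRel G.Adj] (ID : V → ℕ) (hID : Function.Injective ID) :
    (∀ u : V, (∀ w : V, toLex (G.degree w, ID w) ≤ toLex (G.degree u, ID u)) →
        ¬ isMarked G ID u) ∧
    (∀ u v : V, ¬ isMarked G ID u → ¬ isMarked G ID v → ¬ G.Adj u v) ∧
    (Finset.univ.filter (fun u : V => 0 < G.degree u)).card ≤
      2 * (Finset.univ.filter (fun u : V => isMarked G ID u ∧ 0 < G.degree u)).card := by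
  refine ⟨fun u hmax hu => ?_, fun u v hu hv huv => ?_, ?_⟩
  · obtain ⟨v, -, hlt⟩ := isMarked_iff.mp hu
    exact (hmax v).not_gt hlt
  · exact (lt_of_not_isMarked_of_adj hID hu huv).not_gt
      (lt_of_not_isMarked_of_adj hID hv huv.symm)
  · set N := univ.filter (fun u : V => 0 < G.degree u)
    have hsplit := card_filter_add_card_filter_not (s := N) (isMarked G ID)
    have hunmarked : #(N.filter (¬ isMarked G ID ·)) ≤ #(N.filter (isMarked G ID)) := by
      refine G.card_le_card_of_adj_mem_of_degree_le _ _
        (fun u hu => (mem_filter.mp (mem_filter.mp hu).1).2) fun u hu v huv => ?_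
      simp only [N, mem_filter, mem_univ, true_and] at hu ⊢
      have hv : 0 < G.degree v := G.degree_pos_iff_exists_adj v |>.mpr ⟨u, huv.symm⟩
      exact ⟨⟨hv, isMarked_of_not_isMarked_of_adj hID hu.2 huv⟩,
        degree_le_of_not_isMarked_of_adj hID hu.2 huv⟩
    simp only [N, filter_filter, and_comm] at hsplit hunmarked ⊢
    omega

theorem elimination_basic {V : Type*} [Fintype V] [DecidableEq V]
    (G : SimpleGraph V) [DecidableRel G.Adj] (ID : V → ℕ) (hID : Function.Injective ID) :
    (∀ u : V, (∀ w : V, toLex (G.degree w, ID w) ≤ toLex (G.degree u, ID u)) →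
        ¬ isMarked G ID u) ∧
    (∀ u v : V, ¬ isMarked G ID u → ¬ isMarked G ID v → ¬ G.Adj u v) ∧
    (Finset.univ.filter (fun u : V => 0 < G.degree u)).card ≤
      2 * (Finset.univ.filter (fun u : V => isMarked G ID u ∧ 0 < G.degree u)).card :=
  elimination_basic_general G ID hID
end

section
/- For every finite set N and every k ≥ 1, there exists a k-superimposed code of length l = 4(k+1)²·⌈log₂ |N|⌉ for N: an assignment of binary codewords of length l to the elements of N such that (1) every superimposition (bitwise OR) of at most k codewords is unique among such superimpositions, and (2) every superimposition of more than k codewords differs from every superimposition of at most k codewords. -/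
open scoped Classical

/-- The superimposition (bitwise OR) of the codewords of a finite set `S`. -/
noncomputable def superimpose {N : Type*} {l : ℕ} (C : N → (Fin l → Bool)) (S : Finset N) :
    Fin l → Bool :=
  fun i => S.sup (fun x => C x i)

/-!
A column of the code is modelled as `c : N → Fin (k + 1)`, the bit of `x` being `1` iff
`c x = 0`; counting columns is then the probabilistic method with independent bits that are `1`
with probability `1 / (k + 1)`. A column separates `x` from a set `S ∌ x` of at most `k` words
(bit of `x` is `1`, bits of `S` are `0`) with probability `(1/(k+1)) (k/(k+1))^|S| ≥ 1/(4(k+1))`.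
Writing `S` as the image of some `f : Fin k → N` with `x` erased gives at most `n^(k+1)` such
events, and each fails in all `l = 4(k+1)² ⌈log₂ n⌉` columns with probability at most
`(1 - 1/(4(k+1)))^l < 2^(-(k+1)⌈log₂ n⌉) ≤ n^(-(k+1))`. By the union bound some code
separates every such pair, and then for `S ⊄ S'` with `|S'| ≤ k` a column separating some
`x ∈ S \ S'` from `S'` tells the two superimpositions apart.
-/

open Finset

def IsCoverFree {N : Type*} {l : ℕ} (C : N → Fin l → Bool) (k : ℕ) : Prop :=
  ∀ x S, x ∉ S → #S ≤ k → ∃ i, C x i = true ∧ ∀ y ∈ S, C y i = false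

theorem IsCoverFree.superimpose_ne {N : Type*} {l k : ℕ} {C : N → Fin l → Bool}
    (hC : IsCoverFree C k) {S S' : Finset N} (h : ¬S ⊆ S') (hS' : #S' ≤ k) :
    superimpose C S ≠ superimpose C S' := by
  obtain ⟨x, hxS, hxS'⟩ := not_subset.1 h
  obtain ⟨i, hxi, hS'i⟩ := hC x S' hxS' hS'
  have hS : superimpose C S i = true := by
    have hle : C x i ≤ superimpose C S i := le_sup (f := fun y => C y i) hxS
    rw [hxi] at hle
    exact top_unique hle
  have hS' : superimpose C S' i = false := (Finset.sup_eq_bot_iff _ _).2 hS'i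
  exact fun heq => by simp [heq, hS'] at hS

theorem Finset.exists_fin_image_erase_eq {α : Type*} [DecidableEq α] {k : ℕ} {S : Finset α}
    (hS : #S ≤ k) {a : α} (ha : a ∉ S) : ∃ f : Fin k → α, (univ.image f).erase a = S := by
  refine ⟨fun i => S.toList.getD i a, ?_⟩
  ext y
  simp only [mem_erase, mem_image, mem_univ, true_and]
  constructor
  · rintro ⟨hya, i, rfl⟩
    by_cases hi : (i : ℕ) < S.toList.length
    · rw [List.getD_eq_getElem _ _ hi]
      exact mem_toList.1 (List.getElem_mem hi)
    · exact absurd (List.getD_eq_default _ _ (not_lt.1 hi)) hya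
  · intro hy
    obtain ⟨j, hj, rfl⟩ := List.mem_iff_getElem.1 (mem_toList.2 hy)
    refine ⟨fun h => ha (h ▸ hy), ⟨j, hj.trans_le (by simpa using hS)⟩, ?_⟩
    exact List.getD_eq_getElem _ _ hj

theorem exists_forall_exists_mem_of_sum_lt {ι α : Type*} [Fintype ι] [Fintype α]
    [DecidableEq α] (G : ι → Finset α) (l : ℕ)
    (h : ∑ p, #(G p)ᶜ ^ l < Fintype.card α ^ l) :
    ∃ ω : Fin l → α, ∀ p, ∃ i, ω i ∈ G p := by
  set B := univ.biUnion fun p => Fintype.piFinset fun _ : Fin l => (G p)ᶜ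
  have hB : #B < #(univ : Finset (Fin l → α)) :=
    calc #B ≤ ∑ p, #(Fintype.piFinset fun _ : Fin l => (G p)ᶜ) := card_biUnion_le
      _ = ∑ p, #(G p)ᶜ ^ l := by simp [Fintype.card_piFinset]
      _ < #(univ : Finset (Fin l → α)) := by simpa using h
  obtain ⟨ω, -, hω⟩ := exists_mem_notMem_of_card_lt_card hB
  refine ⟨ω, fun p => ?_⟩
  by_contra! hp
  exact hω (mem_biUnion.2 ⟨p, mem_univ _, Fintype.mem_piFinset.2 fun i => mem_compl.2 (hp i)⟩)

theorem succ_pow_le_four_mul_pow {k s : ℕ} (hs : s ≤ k) : (k + 1) ^ s ≤ 4 * k ^ s := by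
  rcases Nat.eq_zero_or_pos k with rfl | hk
  · simp [Nat.le_zero.mp hs]
  have hk' : (0 : ℝ) < k := by exact_mod_cast hk
  suffices ((k : ℝ) + 1) ^ s ≤ 4 * (k : ℝ) ^ s by exact_mod_cast this
  calc ((k : ℝ) + 1) ^ s = (k : ℝ) ^ s * (1 + (k : ℝ)⁻¹) ^ s := by
        rw [← mul_pow, mul_add, mul_inv_cancel₀ hk'.ne', mul_one]
    _ ≤ (k : ℝ) ^ s * (1 + (k : ℝ)⁻¹) ^ k := by gcongr; simp
    _ ≤ (k : ℝ) ^ s * Real.exp 1 := by gcongr; exact Real.one_add_inv_pow_le_exp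
    _ ≤ (k : ℝ) ^ s * 4 := by gcongr; linarith [Real.exp_one_lt_d9]
    _ = 4 * (k : ℝ) ^ s := mul_comm _ _

noncomputable def separatingColumns {N : Type*} [Fintype N] (k : ℕ) (x : N) (S : Finset N) :
    Finset (N → Fin (k + 1)) :=
  Fintype.piFinset fun y => if y = x then {0} else if y ∈ S then {0}ᶜ else univ

section separatingColumns

variable {N : Type*} [Fintype N] {k : ℕ} {x : N} {S : Finset N}

theorem apply_of_mem_separatingColumns (hx : x ∉ S) {c : N → Fin (k + 1)}
    (hc : c ∈ separatingColumns k x S) : c x = 0 ∧ ∀ y ∈ S, c y ≠ 0 := by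
  rw [separatingColumns, Fintype.mem_piFinset] at hc
  refine ⟨by simpa using hc x, fun y hy => ?_⟩
  have hyx : y ≠ x := fun h => hx (h ▸ hy)
  simpa [hyx, hy] using hc y

theorem card_separatingColumns (hx : x ∉ S) :
    #(separatingColumns k x S) = k ^ #S * (k + 1) ^ (Fintype.card N - 1 - #S) := by
  have hcol : ∀ y ∈ ({x}ᶜ : Finset N),
      #(if y = x then {0} else if y ∈ S then {0}ᶜ else univ : Finset (Fin (k + 1))) =
        if y ∈ S then k else k + 1 := by
    intro y hy
    split_ifs <;> simp_all [card_compl]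
  have hin : ({x}ᶜ : Finset N).filter (· ∈ S) = S := by
    ext y
    simp only [mem_filter, mem_compl, mem_singleton, and_iff_right_iff_imp]
    exact fun hy h => hx (h ▸ hy)
  have hout : #(({x}ᶜ : Finset N).filter (· ∉ S)) = Fintype.card N - 1 - #S := by
    have := card_filter_add_card_filter_not (s := ({x}ᶜ : Finset N)) (· ∈ S)
    rw [hin, card_compl, card_singleton] at this
    omega
  rw [separatingColumns, Fintype.card_piFinset, Fintype.prod_eq_mul_prod_compl x,
    prod_congr rfl hcol, prod_ite, prod_const, prod_const, hin, hout]
  simp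

theorem pow_card_le_mul_card_separatingColumns (hx : x ∉ S) (hS : #S ≤ k) :
    (k + 1) ^ Fintype.card N ≤ 4 * (k + 1) * #(separatingColumns k x S) := by
  have hSx : #S ≤ Fintype.card N - 1 := by
    simpa [card_compl] using
      card_le_card fun y hy => mem_compl.2 fun h => hx ((mem_singleton.1 h : y = x) ▸ hy)
  have hN : Fintype.card N = #S + (Fintype.card N - 1 - #S) + 1 := by
    have := Fintype.card_pos_iff.2 ⟨x⟩
    omega
  rw [card_separatingColumns hx]
  calc (k + 1) ^ Fintype.card N
        = (k + 1) * ((k + 1) ^ #S * (k + 1) ^ (Fintype.card N - 1 - #S)) := by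
        conv_lhs => rw [hN]
        ring
    _ ≤ (k + 1) * (4 * k ^ #S * (k + 1) ^ (Fintype.card N - 1 - #S)) := by
        gcongr; exact succ_pow_le_four_mul_pow hS
    _ = 4 * (k + 1) * (k ^ #S * (k + 1) ^ (Fintype.card N - 1 - #S)) := by ring

theorem card_compl_separatingColumns_le (hx : x ∉ S) (hS : #S ≤ k) :
    (#(separatingColumns k x S)ᶜ : ℝ) ≤
      (1 - 1 / (4 * ((k : ℝ) + 1))) * ((k : ℝ) + 1) ^ Fintype.card N := by
  have hsep : ((k : ℝ) + 1) ^ Fintype.card N / (4 * ((k : ℝ) + 1)) ≤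
      #(separatingColumns k x S) := by
    rw [div_le_iff₀ (by positivity), mul_comm]
    exact_mod_cast pow_card_le_mul_card_separatingColumns hx hS
  rw [card_compl, Nat.cast_sub (card_le_univ _)]
  simp only [Fintype.card_fun, Fintype.card_fin, Nat.cast_pow, Nat.cast_add, Nat.cast_one]
  linarith [one_div_mul_eq_div (4 * ((k : ℝ) + 1)) (((k : ℝ) + 1) ^ Fintype.card N)]

end separatingColumns

theorem exists_isCoverFree (N : Type*) [Fintype N] (k l : ℕ)
    (h : (Fintype.card N : ℝ) ^ (k + 1) * (1 - 1 / (4 * ((k : ℝ) + 1))) ^ l < 1) :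
    ∃ C : N → Fin l → Bool, IsCoverFree C k := by
  set q : ℝ := 1 - 1 / (4 * ((k : ℝ) + 1))
  let G : N × (Fin k → N) → Finset (N → Fin (k + 1)) := fun p =>
    separatingColumns k p.1 ((univ.image p.2).erase p.1)
  have hG : ∀ p, (#(G p)ᶜ : ℝ) ≤ q * ((k : ℝ) + 1) ^ Fintype.card N := fun ⟨x, f⟩ =>
    card_compl_separatingColumns_le (notMem_erase x _)
      (card_erase_le.trans (card_image_le.trans (by simp)))
  have hsum : ∑ p, #(G p)ᶜ ^ l < Fintype.card (N → Fin (k + 1)) ^ l := by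
    suffices (∑ p, (#(G p)ᶜ : ℝ) ^ l) < (((k : ℝ) + 1) ^ Fintype.card N) ^ l by
      simpa only [Fintype.card_fun, Fintype.card_fin, ← Nat.cast_lt (α := ℝ), Nat.cast_sum,
        Nat.cast_pow, Nat.cast_add, Nat.cast_one]
    calc ∑ p, (#(G p)ᶜ : ℝ) ^ l
        ≤ ∑ _p : N × (Fin k → N), (q * ((k : ℝ) + 1) ^ Fintype.card N) ^ l := by
          gcongr with p; exact hG p
      _ = ((Fintype.card N : ℝ) ^ (k + 1) * q ^ l) * (((k : ℝ) + 1) ^ Fintype.card N) ^ l := by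
          simp only [sum_const, card_univ, Fintype.card_prod, Fintype.card_fun, Fintype.card_fin,
            nsmul_eq_mul, Nat.cast_mul, Nat.cast_pow, mul_pow]
          ring
      _ < (((k : ℝ) + 1) ^ Fintype.card N) ^ l := by
          apply mul_lt_of_lt_one_left (by positivity) h
  obtain ⟨ω, hω⟩ := exists_forall_exists_mem_of_sum_lt G l hsum
  refine ⟨fun x i => decide (ω i x = 0), fun x S hx hS => ?_⟩
  obtain ⟨f, rfl⟩ := exists_fin_image_erase_eq hS hx
  obtain ⟨i, hi⟩ := hω (x, f)
  obtain ⟨h0, hne⟩ := apply_of_mem_separatingColumns hx hi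
  exact ⟨i, by simpa using h0, fun y hy => by simpa using hne y hy⟩

theorem card_pow_mul_one_sub_pow_lt_one {n : ℕ} (hn : 2 ≤ n) (k : ℕ) :
    (n : ℝ) ^ (k + 1) * (1 - 1 / (4 * ((k : ℝ) + 1))) ^ (4 * (k + 1) ^ 2 * Nat.clog 2 n) <
      1 := by
  set m := Nat.clog 2 n
  set q : ℝ := 1 - 1 / (4 * ((k : ℝ) + 1))
  have hq : 0 ≤ q := by
    have : 1 / (4 * ((k : ℝ) + 1)) ≤ 1 := by
      rw [div_le_one (by positivity)]; linarith [(Nat.cast_nonneg k : (0 : ℝ) ≤ k)]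
    linarith
  have hqr : q ^ (4 * (k + 1)) < 1 / 2 := by
    have h := Real.one_sub_div_pow_le_exp_neg (n := 4 * (k + 1)) (t := 1)
      (by push_cast; linarith [(Nat.cast_nonneg k : (0 : ℝ) ≤ k)])
    have he : Real.exp (-1) < 1 / 2 := by
      rw [Real.exp_neg, one_div]
      exact inv_strictAnti₀ two_pos (by linarith [Real.add_one_lt_exp (one_ne_zero (α := ℝ))])
    push_cast at h
    linarith
  have hm : 0 < m := Nat.clog_pos one_lt_two hn
  have hn2 : (n : ℝ) ≤ 2 ^ m := by exact_mod_cast Nat.le_pow_clog one_lt_two n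
  calc (n : ℝ) ^ (k + 1) * q ^ (4 * (k + 1) ^ 2 * m)
      = (n : ℝ) ^ (k + 1) * (q ^ (4 * (k + 1))) ^ ((k + 1) * m) := by
        rw [← pow_mul]; congr 2; ring
    _ < (n : ℝ) ^ (k + 1) * (1 / 2) ^ ((k + 1) * m) := by gcongr
    _ ≤ (2 ^ m) ^ (k + 1) * (1 / 2) ^ ((k + 1) * m) := by gcongr
    _ = 1 := by rw [← pow_mul, mul_comm m, ← mul_pow]; norm_num

theorem exists_superimposed_code_general (N : Type*) [Fintype N] (hN : 2 ≤ Fintype.card N)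
    (k : ℕ) :
    ∃ C : N → (Fin (4 * (k + 1) ^ 2 * Nat.clog 2 (Fintype.card N)) → Bool),
      (∀ S S' : Finset N, S.card ≤ k → S'.card ≤ k → S ≠ S' →
        superimpose C S ≠ superimpose C S') ∧
      (∀ S S' : Finset N, S.card ≤ k → k < S'.card →
        superimpose C S ≠ superimpose C S') := by
  obtain ⟨C, hC⟩ := exists_isCoverFree N k _ (card_pow_mul_one_sub_pow_lt_one hN k)
  refine ⟨C, fun S S' hS hS' hne => ?_, fun S S' hS hS' => ?_⟩
  · by_cases hsub : S ⊆ S'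
    · exact (hC.superimpose_ne (fun h => hne (hsub.antisymm h)) hS).symm
    · exact hC.superimpose_ne hsub hS'
  · exact (hC.superimpose_ne (fun h => by have := card_le_card h; omega) hS).symm

/-- Existence of a `k`-superimposed code of length `l = 4(k+1)² ⌈log₂ |N|⌉`:
superimpositions of at most `k` codewords are pairwise distinct, and differ from
every superimposition of more than `k` codewords. -/
theorem exists_superimposed_code (N : Type*) [Fintype N] (hN : 2 ≤ Fintype.card N)
    (k : ℕ) (hk : 1 ≤ k) :
    ∃ C : N → (Fin (4 * (k + 1) ^ 2 * Nat.clog 2 (Fintype.card N)) → Bool),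
      (∀ S S' : Finset N, S.card ≤ k → S'.card ≤ k → S ≠ S' →
        superimpose C S ≠ superimpose C S') ∧
      (∀ S S' : Finset N, S.card ≤ k → k < S'.card →
        superimpose C S ≠ superimpose C S') :=
  exists_superimposed_code_general N hN k
end

section
/- Suppose a potential argument assigns each of n nodes one unit of potential, passed to the nearest candidate (ties broken arbitrarily). If a candidate u has no other candidate within distance 4n/k (where k is the number of candidates), then u receives potential at least 2n/k, and therefore the number of such candidates is at most k/2. -/
/-!
A vertex within distance `r` of a candidate `u` whose rivals are all farther than `2r` cannot
be closer to a rival than to `u`, so it sends its potential to `u`. Following a geodesic out of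
`u`, a ball of radius `r` in a connected graph has at least `min (r + 1) n` vertices; with
`r = ⌊2n/k⌋` this gives every isolated candidate at least `2n/k` units. The fibers of the
assignment are disjoint, so at most `n / (2n/k) = k/2` candidates can be isolated.
-/

open scoped Classical
open Finset

theorem Finset.card_nsmul_le_card_of_le_card_fiber {α β R : Type*} [Fintype α]
    [AddCommMonoidWithOne R] [PartialOrder R] [AddLeftMono R] [ZeroLEOneClass R]
    (f : α → β) (T : Finset β) (m : R) (hm : ∀ u ∈ T, m ≤ #{v | f v = u}) :
    #T • m ≤ Fintype.card α :=
  calc #T • m ≤ ∑ u ∈ T, (#{v | f v = u} : R) := card_nsmul_le_sum T _ m hm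
    _ = #{v | f v ∈ T} := by
        rw [← Nat.cast_sum]
        congr 1
        convert sum_card_fiberwise_eq_card_filter univ T f
    _ ≤ Fintype.card α := Nat.mono_cast (card_le_univ _)

namespace SimpleGraph

variable {V : Type*} {G : SimpleGraph V}

lemma Walk.dist_getVert_of_length_eq_dist {u w : V} (p : G.Walk u w)
    (hp : p.length = G.dist u w) {i : ℕ} (hi : i ≤ p.length) :
    G.dist u (p.getVert i) = i := by
  have hto : G.dist u (p.getVert i) ≤ i :=
    (dist_le (p.take i)).trans (by simp [Walk.take_length])
  have hfrom : G.dist (p.getVert i) w ≤ p.length - i :=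
    (dist_le (p.drop i)).trans (by simp [Walk.drop_length])
  have := (p.drop i).reachable.dist_triangle_right u
  omega

lemma Connected.min_le_card_filter_dist_le [Fintype V] (hG : G.Connected) (u : V) (r : ℕ) :
    min (r + 1) (Fintype.card V) ≤ #{v | G.dist u v ≤ r} := by
  by_cases hfar : ∃ w, r ≤ G.dist u w
  · obtain ⟨w, hw⟩ := hfar
    obtain ⟨p, hp⟩ := (hG u w).exists_walk_length_eq_dist
    have hdist {i} (hi : i ∈ range (r + 1)) : G.dist u (p.getVert i) = i :=
      p.dist_getVert_of_length_eq_dist hp (by simp at hi; omega)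
    calc min (r + 1) (Fintype.card V) ≤ #(range (r + 1)) := by simp
      _ ≤ #{v | G.dist u v ≤ r} := by
        refine card_le_card_of_injOn p.getVert (fun i hi => ?_) (fun i hi j hj hij => ?_)
        · simp only [coe_range, Set.mem_Iio] at hi
          simpa [hdist (mem_range.2 hi)] using Nat.lt_succ_iff.1 hi
        · rw [← hdist hi, ← hdist hj, hij]
  · push Not at hfar
    rw [filter_true_of_mem fun v _ => (hfar v).le, card_univ]
    exact min_le_right _ _

lemma Connected.eq_of_dist_le_of_forall_lt_dist (hG : G.Connected) {C : Finset V} {f : V → V}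
    (hfC : ∀ v, f v ∈ C) (hnear : ∀ v, ∀ c ∈ C, G.dist v (f v) ≤ G.dist v c)
    {u : V} (hu : u ∈ C) {r : ℕ} (hiso : ∀ c ∈ C, c ≠ u → 2 * r < G.dist u c)
    {v : V} (hv : G.dist u v ≤ r) : f v = u := by
  by_contra hne
  have hfar := hiso (f v) (hfC v) hne
  have hclose := hnear v u hu
  have htri := hG.dist_triangle (u := u) (v := v) (w := f v)
  have hsymm : G.dist v u = G.dist u v := dist_comm
  omega

lemma Connected.le_card_fiber_of_two_mul_lt_dist [Fintype V] (hG : G.Connected) {C : Finset V}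
    {f : V → V} (hfC : ∀ v, f v ∈ C) (hnear : ∀ v, ∀ c ∈ C, G.dist v (f v) ≤ G.dist v c)
    {u : V} (hu : u ∈ C) {ρ : ℝ} (hρ0 : 0 ≤ ρ) (hρn : ρ ≤ Fintype.card V)
    (hiso : ∀ c ∈ C, c ≠ u → 2 * ρ < G.dist u c) :
    ρ ≤ #{v | f v = u} := by
  set r := ⌊ρ⌋₊
  have hball : univ.filter (fun v => G.dist u v ≤ r) ⊆ univ.filter (f · = u) :=
    fun v hv => by
      refine mem_filter.2 ⟨mem_univ v, hG.eq_of_dist_le_of_forall_lt_dist hfC hnear hu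
        (fun c hc hcu => ?_) (mem_filter.1 hv).2⟩
      exact_mod_cast (by linarith [hiso c hc hcu, Nat.floor_le hρ0] : (2 * r : ℝ) < G.dist u c)
  calc ρ ≤ (min (r + 1) (Fintype.card V) : ℕ) := by
        push_cast
        exact le_min (Nat.lt_floor_add_one ρ).le hρn
    _ ≤ #{v | f v = u} := by
        exact_mod_cast (hG.min_le_card_filter_dist_le u r).trans (card_le_card hball)

end SimpleGraph

/-- Potential argument: each of the `n` vertices passes one unit of potential to a
nearest candidate `f v`. A candidate with no other candidate within distance `4n/k`
receives potential at least `2n/k`, hence at most `k/2` candidates are that isolated. -/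
theorem potential_argument {V : Type*} [Fintype V]
    (G : SimpleGraph V) (hG : G.Connected) (C : Finset V) (k : ℕ)
    (hk : C.card = k) (hk2 : 2 ≤ k)
    (f : V → V) (hfC : ∀ v, f v ∈ C)
    (hnear : ∀ v, ∀ c ∈ C, G.dist v (f v) ≤ G.dist v c) :
    (∀ u ∈ C,
        (∀ v ∈ C, v ≠ u → 4 * (Fintype.card V : ℝ) / k < G.dist u v) →
        2 * (Fintype.card V : ℝ) / k ≤
          (Finset.univ.filter fun v => f v = u).card) ∧
    2 * (C.filter fun u => ∀ v ∈ C, v ≠ u →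
          4 * (Fintype.card V : ℝ) / k < G.dist u v).card ≤ k := by
  set n := Fintype.card V
  have hk0 : (0 : ℝ) < k := by positivity
  have hn0 : (0 : ℝ) < n := by exact_mod_cast (by omega : 0 < k).trans_le (hk ▸ card_le_univ C)
  have hfiber (u) (hu : u ∈ C) (hiso : ∀ v ∈ C, v ≠ u → 4 * (n : ℝ) / k < G.dist u v) :
      2 * (n : ℝ) / k ≤ #{v | f v = u} := by
    refine hG.le_card_fiber_of_two_mul_lt_dist hfC hnear hu (by positivity) ?_
      fun c hc hcu => ?_
    · rw [div_le_iff₀ hk0]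
      nlinarith [mul_le_mul_of_nonneg_left (by exact_mod_cast hk2 : (2 : ℝ) ≤ k) hn0.le]
    · linarith [hiso c hc hcu, (by ring : 4 * (n : ℝ) / k = 2 * (2 * n / k))]
  refine ⟨hfiber, ?_⟩
  have hcount := card_nsmul_le_card_of_le_card_fiber f _ _
    fun u hu => hfiber u (mem_filter.1 hu).1 (mem_filter.1 hu).2
  rw [nsmul_eq_mul, mul_div_assoc', div_le_iff₀ hk0] at hcount
  rw [← Nat.cast_le (α := ℝ), Nat.cast_mul, Nat.cast_ofNat]
  nlinarith
end
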